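/- arXiv:2405.20452 — 3 statements merged into one kernel-verified Lean document; each statement's English description precedes it below -/
import Mathlib

section
/- Let (X,Y) be discrete with joint distribution μ, let η : 𝒳 → 𝒰 and U = η(X), and let v(·|·) be any conditional distribution from 𝒰 to distributions on 𝒴. Then the cross-entropy risk satisfies E[−log v(Y|η(X))] = D(μ_{Y|U} ‖ v | μ_U) + I(X;Y|U) + H(Y|X), where D(μ_{Y|U} ‖ v | μ_U) = Σ_u μ_U(u) D(μ_{Y|U}(·|u) ‖ v(·|u)) ≥ 0. -/
open Finset

noncomputable section

/-- Marginal distribution of the first coordinate of a joint distribution. -/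
def margX {X Y : Type*} [Fintype Y] (μ : X → Y → ℝ) (x : X) : ℝ := ∑ y, μ x y

/-- Marginal distribution of the second coordinate. -/
def margY {X Y : Type*} [Fintype X] (μ : X → Y → ℝ) (y : Y) : ℝ := ∑ x, μ x y

/-- Distribution of `U = η X`. -/
def margU {X Y U : Type*} [Fintype X] [Fintype Y] [DecidableEq U]
    (μ : X → Y → ℝ) (η : X → U) (u : U) : ℝ :=
  ∑ x, if η x = u then margX μ x else 0

/-- Joint probability `P(Y = y, η X = u)`. -/
def margYU {X Y U : Type*} [Fintype X] [DecidableEq U]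
    (μ : X → Y → ℝ) (η : X → U) (y : Y) (u : U) : ℝ :=
  ∑ x, if η x = u then μ x y else 0

/-- Joint distribution of the pair `(η X, Y)`. -/
def jointUY {X Y U : Type*} [Fintype X] [DecidableEq U]
    (μ : X → Y → ℝ) (η : X → U) : U → Y → ℝ :=
  fun u y => margYU μ η y u

/-- Shannon mutual information `I(X;Y)` of a joint distribution (natural log). -/
def MI {X Y : Type*} [Fintype X] [Fintype Y] (μ : X → Y → ℝ) : ℝ :=
  ∑ x, ∑ y, μ x y * Real.log (μ x y / (margX μ x * margY μ y))

/-- Conditional Shannon entropy `H(Y|X)`. -/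
def condEnt {X Y : Type*} [Fintype X] [Fintype Y] (μ : X → Y → ℝ) : ℝ :=
  -∑ x, ∑ y, μ x y * Real.log (μ x y / margX μ x)

/-- Conditional mutual information `I(X;Y|U)` where `U = η X` is a deterministic
function of `X`. -/
def condMI {X Y U : Type*} [Fintype X] [Fintype Y] [DecidableEq U]
    (μ : X → Y → ℝ) (η : X → U) : ℝ :=
  ∑ x, ∑ y, μ x y *
    Real.log (μ x y * margU μ η (η x) / (margX μ x * margYU μ η y (η x)))

/-- `μ` is a probability distribution on `X × Y`. -/
def IsDist {X Y : Type*} [Fintype X] [Fintype Y] (μ : X → Y → ℝ) : Prop :=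
  (∀ x y, 0 ≤ μ x y) ∧ ∑ x, ∑ y, μ x y = 1

/-- `X` and `Y` are conditionally independent given `U = η X`: for every `u` with
`P(U = u) > 0`, `P(X = x, Y = y | U = u) = P(X = x | U = u) · P(Y = y | U = u)`
(stated multiplied through by `P(U = u)²`). -/
def CondIndep {X Y U : Type*} [Fintype X] [Fintype Y] [DecidableEq U]
    (μ : X → Y → ℝ) (η : X → U) : Prop :=
  ∀ u, 0 < margU μ η u → ∀ x y,
    (if η x = u then μ x y else 0) * margU μ η u =
      (if η x = u then margX μ x else 0) * margYU μ η y u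

/-- Cross-entropy risk `E_{(X,Y)∼μ}[− log v(Y|X)]` of a predictive conditional
distribution `v`. -/
def risk {X Y : Type*} [Fintype X] [Fintype Y] (μ : X → Y → ℝ) (v : X → Y → ℝ) : ℝ :=
  ∑ x, ∑ y, μ x y * (-Real.log (v x y))

/-- Kullback–Leibler divergence between two joint distributions on `X × Y`. -/
def KL {X Y : Type*} [Fintype X] [Fintype Y] (μ ν : X → Y → ℝ) : ℝ :=
  ∑ x, ∑ y, μ x y * Real.log (μ x y / ν x y)

/-- Averaged conditional KL divergence `D(μ_{Y|X} ‖ v | μ_X)`. -/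
def avgKL {X Y : Type*} [Fintype X] [Fintype Y] (μ : X → Y → ℝ) (v : X → Y → ℝ) : ℝ :=
  ∑ x, margX μ x * ∑ y,
    (μ x y / margX μ x) * Real.log ((μ x y / margX μ x) / v x y)

/-- Averaged conditional KL divergence in the latent domain:
`D(μ_{Y|U} ‖ v | μ_U)` for the encoder `η`. -/
def decKL {X Y U : Type*} [Fintype X] [Fintype Y] [Fintype U] [DecidableEq U]
    (μ : X → Y → ℝ) (η : X → U) (v : U → Y → ℝ) : ℝ :=
  ∑ u, margU μ η u * ∑ y,
    (margYU μ η y u / margU μ η u) *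
      Real.log ((margYU μ η y u / margU μ η u) / v u y)

/-! On the support of `μ`, with `u = η x`, the loss splits telescopically as
`−log v(y|u) = log (μ(y|u) / v(y|u)) + log (μ(y|x) / μ(y|u)) − log μ(y|x)`;
averaging over `μ` gives the three terms, the first one after regrouping the sum over `x`
along the fibres of `η`. Nonnegativity is Gibbs' inequality: `p − q ≤ p log (p / q)`,
summed over `y`. -/

lemma sub_le_mul_log_div {p q : ℝ} (hp : 0 ≤ p) (hq : 0 ≤ q) (hpq : 0 < p → 0 < q) :
    p - q ≤ p * Real.log (p / q) := by
  rcases hp.eq_or_lt with rfl | hp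
  · simpa using hq
  · have key := mul_le_mul_of_nonneg_left
      (Real.one_sub_inv_le_log_of_pos (div_pos hp (hpq hp))) hp.le
    rwa [inv_div, mul_sub, mul_one, mul_div_cancel₀ _ hp.ne'] at key

lemma sum_mul_log_div_nonneg {ι : Type*} (s : Finset ι) {p q : ι → ℝ}
    (hp : ∀ i ∈ s, 0 ≤ p i) (hq : ∀ i ∈ s, 0 ≤ q i) (hpq : ∀ i ∈ s, 0 < p i → 0 < q i)
    (hsum : ∑ i ∈ s, q i ≤ ∑ i ∈ s, p i) :
    0 ≤ ∑ i ∈ s, p i * Real.log (p i / q i) :=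
  calc 0 ≤ ∑ i ∈ s, (p i - q i) := by rw [sum_sub_distrib]; linarith
    _ ≤ _ := sum_le_sum fun i hi => sub_le_mul_log_div (hp i hi) (hq i hi) (hpq i hi)

lemma le_margX {X Y : Type*} [Fintype Y] {μ : X → Y → ℝ} (h0 : ∀ x y, 0 ≤ μ x y)
    (x : X) (y : Y) : μ x y ≤ margX μ x :=
  single_le_sum (fun y _ => h0 x y) (mem_univ y)

section Marginals

variable {X Y U : Type*} [Fintype X] [DecidableEq U] {μ : X → Y → ℝ} (η : X → U)

lemma margYU_nonneg (h0 : ∀ x y, 0 ≤ μ x y) (y : Y) (u : U) : 0 ≤ margYU μ η y u :=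
  sum_nonneg fun x _ => ite_nonneg (h0 x y) le_rfl

lemma le_margYU (h0 : ∀ x y, 0 ≤ μ x y) (x : X) (y : Y) : μ x y ≤ margYU μ η y (η x) := by
  simpa [margYU] using single_le_sum (f := fun x' => if η x' = η x then μ x' y else 0)
    (fun x' _ => ite_nonneg (h0 x' y) le_rfl) (mem_univ x)

variable [Fintype Y]

lemma sum_margYU (u : U) : ∑ y, margYU μ η y u = margU μ η u := by
  simp only [margYU, margU, margX, ← sum_filter]
  exact sum_comm

lemma margYU_le_margU (h0 : ∀ x y, 0 ≤ μ x y) (y : Y) (u : U) :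
    margYU μ η y u ≤ margU μ η u :=
  (single_le_sum (fun y _ => margYU_nonneg η h0 y u) (mem_univ y)).trans_eq (sum_margYU η u)

lemma margU_nonneg (h0 : ∀ x y, 0 ≤ μ x y) (u : U) : 0 ≤ margU μ η u :=
  (sum_nonneg fun y _ => margYU_nonneg η h0 y u).trans_eq (sum_margYU η u)

lemma margYU_eq_zero_of_margU_eq_zero (h0 : ∀ x y, 0 ≤ μ x y) {u : U}
    (hu : margU μ η u = 0) (y : Y) : margYU μ η y u = 0 :=
  le_antisymm (hu ▸ margYU_le_margU η h0 y u) (margYU_nonneg η h0 y u)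

variable [Fintype U]

lemma sum_margYU_mul (F : U → Y → ℝ) :
    ∑ u, ∑ y, margYU μ η y u * F u y = ∑ x, ∑ y, μ x y * F (η x) y := by
  rw [← sum_fiberwise univ η fun x => ∑ y, μ x y * F (η x) y]
  refine sum_congr rfl fun u _ => ?_
  simp only [margYU, ← sum_filter, sum_mul]
  rw [sum_comm]
  refine sum_congr rfl fun x hx => ?_
  rw [(mem_filter.1 hx).2]

lemma decKL_eq_sum (h0 : ∀ x y, 0 ≤ μ x y) (v : U → Y → ℝ) :
    decKL μ η v = ∑ x, ∑ y, μ x y *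
      Real.log (margYU μ η y (η x) / margU μ η (η x) / v (η x) y) := by
  rw [decKL, ← sum_margYU_mul η fun u y => Real.log (margYU μ η y u / margU μ η u / v u y)]
  refine sum_congr rfl fun u _ => ?_
  rw [mul_sum]
  refine sum_congr rfl fun y _ => ?_
  rcases eq_or_ne (margU μ η u) 0 with hu | hu
  · simp [hu, margYU_eq_zero_of_margU_eq_zero η h0 hu]
  · rw [← mul_assoc, mul_div_cancel₀ _ hu]

end Marginals

section CrossEntropy

variable {X Y U : Type*} [Fintype X] [Fintype Y] [Fintype U] [DecidableEq U]
  {μ : X → Y → ℝ} {η : X → U} {v : U → Y → ℝ}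

theorem risk_eq_decKL_add_condMI_add_condEnt (h0 : ∀ x y, 0 ≤ μ x y)
    (hvpos : ∀ u y, 0 < margYU μ η y u → 0 < v u y) :
    risk μ (fun x y => v (η x) y) = decKL μ η v + condMI μ η + condEnt μ := by
  rw [decKL_eq_sum η h0, risk, condMI, condEnt, ← sum_neg_distrib]
  simp only [← sum_neg_distrib, ← sum_add_distrib]
  refine sum_congr rfl fun x _ => sum_congr rfl fun y _ => ?_
  rcases (h0 x y).eq_or_lt with hp | hp
  · simp [← hp]
  have hm := hp.trans_le (le_margX h0 x y)
  have hj := hp.trans_le (le_margYU η h0 x y)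
  have hn := hj.trans_le (margYU_le_margU η h0 y (η x))
  have hw := hvpos _ _ hj
  rw [Real.log_div (div_pos hj hn).ne' hw.ne', Real.log_div hj.ne' hn.ne',
    Real.log_div (mul_pos hp hn).ne' (mul_pos hm hj).ne', Real.log_mul hp.ne' hn.ne',
    Real.log_mul hm.ne' hj.ne', Real.log_div hp.ne' hm.ne']
  ring

theorem decKL_nonneg (h0 : ∀ x y, 0 ≤ μ x y) (hv0 : ∀ u y, 0 ≤ v u y)
    (hv1 : ∀ u, ∑ y, v u y ≤ 1) (hvpos : ∀ u y, 0 < margYU μ η y u → 0 < v u y) :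
    0 ≤ decKL μ η v := by
  refine sum_nonneg fun u _ => ?_
  rcases (margU_nonneg η h0 u).eq_or_lt with hu | hu
  · simp [← hu]
  refine mul_nonneg hu.le (sum_mul_log_div_nonneg univ
    (fun y _ => div_nonneg (margYU_nonneg η h0 y u) hu.le) (fun y _ => hv0 u y)
    (fun y _ hq => hvpos u y ((div_pos_iff_of_pos_right hu).1 hq)) ?_)
  rw [← sum_div, sum_margYU, div_self hu.ne']
  exact hv1 u

end CrossEntropy

/-- cross-entropy decomposition
`E[−log v(Y|η(X))] = D(μ_{Y|U}‖v|μ_U) + I(X;Y|U) + H(Y|X)`, with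
`D(μ_{Y|U}‖v|μ_U) ≥ 0`. -/
theorem stmt5 {X Y U : Type*} [Fintype X] [Fintype Y] [Fintype U] [DecidableEq U]
    (μ : X → Y → ℝ) (η : X → U) (v : U → Y → ℝ) (hμ : IsDist μ)
    (hv0 : ∀ u y, 0 ≤ v u y) (hv1 : ∀ u, ∑ y, v u y = 1)
    (hvpos : ∀ u y, 0 < margYU μ η y u → 0 < v u y) :
    risk μ (fun x y => v (η x) y) = decKL μ η v + condMI μ η + condEnt μ ∧
      0 ≤ decKL μ η v :=
  ⟨risk_eq_decKL_add_condMI_add_condEnt hμ.1 hvpos,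
    decKL_nonneg hμ.1 hv0 (fun u => (hv1 u).le) hvpos⟩
end
end

section
/- For discrete random variables, if for every x with μ_X(x) > 0 the conditional distribution of Y given X = x depends only on η(x) (i.e., μ_{Y|X}(·|x) = μ_{Y|X}(·|x') whenever η(x) = η(x') and both have positive probability), then η(X) is information sufficient: I(X;Y) = I(η(X);Y). -/
open Finset

noncomputable section

/-!
Where `μ x > 0`, the hypothesis says the conditional law `μ(·|x)` is constant on the fibre of
`η` through `x`; averaging over that fibre shows it equals `P(Y = · | η X = η x)`. Hence the
log-likelihood ratio in `I(X;Y)` depends on `x` only through `η x`, and summing over the fibres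
of `η` turns `I(X;Y)` term by term into `I(η X;Y)`.
-/

lemma margX_nonneg {X Y : Type*} [Fintype Y] {μ : X → Y → ℝ} (hμ : ∀ x y, 0 ≤ μ x y)
    (x : X) : 0 ≤ margX μ x :=
  sum_nonneg fun y _ => hμ x y

lemma eq_zero_of_margX_eq_zero {X Y : Type*} [Fintype Y] {μ : X → Y → ℝ}
    (hμ : ∀ x y, 0 ≤ μ x y) {x : X} (hx : margX μ x = 0) (y : Y) : μ x y = 0 :=
  (sum_eq_zero_iff_of_nonneg fun y _ => hμ x y).mp hx y (mem_univ y)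

lemma margX_pos_of_ne_zero {X Y : Type*} [Fintype Y] {μ : X → Y → ℝ}
    (hμ : ∀ x y, 0 ≤ μ x y) {x : X} {y : Y} (hxy : μ x y ≠ 0) : 0 < margX μ x :=
  (margX_nonneg hμ x).lt_of_ne fun hx => hxy (eq_zero_of_margX_eq_zero hμ hx.symm y)

lemma margX_le_margU {X Y U : Type*} [Fintype X] [Fintype Y] [DecidableEq U]
    {μ : X → Y → ℝ} (hμ : ∀ x y, 0 ≤ μ x y) (η : X → U) (x : X) :
    margX μ x ≤ margU μ η (η x) := by
  unfold margU
  simpa using single_le_sum (f := fun x' => if η x' = η x then margX μ x' else 0)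
    (fun x' _ => by split_ifs <;> simp [margX_nonneg hμ]) (mem_univ x)

lemma margX_jointUY {X Y U : Type*} [Fintype X] [Fintype Y] [DecidableEq U]
    (μ : X → Y → ℝ) (η : X → U) (u : U) :
    margX (jointUY μ η) u = margU μ η u := by
  simp only [margX, jointUY, margYU, margU]
  rw [sum_comm]
  exact sum_congr rfl fun x _ => by split_ifs <;> simp

lemma margY_jointUY {X Y U : Type*} [Fintype X] [Fintype U] [DecidableEq U]
    (μ : X → Y → ℝ) (η : X → U) (y : Y) :
    margY (jointUY μ η) y = margY μ y := by
  simp only [margY, jointUY, margYU]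
  rw [sum_comm]
  simp

lemma sum_mul_comp_eq_sum_jointUY_mul {X Y U : Type*} [Fintype X] [Fintype Y] [Fintype U]
    [DecidableEq U] (μ : X → Y → ℝ) (η : X → U) (F : U → Y → ℝ) :
    ∑ x, ∑ y, μ x y * F (η x) y = ∑ u, ∑ y, jointUY μ η u y * F u y := by
  simp only [jointUY, margYU, sum_mul, ite_mul, zero_mul]
  rw [sum_comm_cycle]
  refine sum_congr rfl fun x _ => ?_
  rw [sum_comm]
  simp

lemma margYU_eq_margU_mul {X Y U : Type*} [Fintype X] [Fintype Y] [DecidableEq U]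
    {μ : X → Y → ℝ} (hμ : ∀ x y, 0 ≤ μ x y) (η : X → U) (u : U) (y : Y) (c : ℝ)
    (hc : ∀ x, η x = u → 0 < margX μ x → μ x y / margX μ x = c) :
    margYU μ η y u = margU μ η u * c := by
  simp only [margYU, margU, sum_mul, ite_mul, zero_mul]
  refine sum_congr rfl fun x _ => if_ctx_congr Iff.rfl (fun hx => ?_) fun _ => rfl
  rcases (margX_nonneg hμ x).eq_or_lt with h0 | hpos
  · rw [eq_zero_of_margX_eq_zero hμ h0.symm y, ← h0, zero_mul]
  · rw [← hc x hx hpos, mul_div_cancel₀ _ hpos.ne']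

lemma div_margX_eq_margYU_div_margU {X Y U : Type*} [Fintype X] [Fintype Y] [DecidableEq U]
    {μ : X → Y → ℝ} (hμ : ∀ x y, 0 ≤ μ x y) (η : X → U)
    (h : ∀ x x', η x = η x' → 0 < margX μ x → 0 < margX μ x' →
      ∀ y, μ x y / margX μ x = μ x' y / margX μ x')
    {x : X} (hx : 0 < margX μ x) (y : Y) :
    μ x y / margX μ x = margYU μ η y (η x) / margU μ η (η x) := by
  have hU : 0 < margU μ η (η x) := hx.trans_le (margX_le_margU hμ η x)
  rw [margYU_eq_margU_mul hμ η (η x) y _ fun x' hx' hpos => h x' x hx' hpos hx y,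
    mul_div_cancel_left₀ _ hU.ne']

/-- if the conditional distribution of `Y` given `X = x` depends only
on `η(x)` (at points of positive probability), then `η(X)` is information
sufficient: `I(X;Y) = I(η(X);Y)`. -/
theorem stmt15 {X Y U : Type*} [Fintype X] [Fintype Y] [Fintype U] [DecidableEq U]
    (μ : X → Y → ℝ) (η : X → U) (hμ : IsDist μ)
    (h : ∀ x x', η x = η x' → 0 < margX μ x → 0 < margX μ x' →
      ∀ y, μ x y / margX μ x = μ x' y / margX μ x') :
    MI μ = MI (jointUY μ η) := by
  set L : U → Y → ℝ := fun u y => Real.log (margYU μ η y u / (margU μ η u * margY μ y))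
  have hterm : ∀ x y, μ x y * Real.log (μ x y / (margX μ x * margY μ y)) =
      μ x y * L (η x) y := by
    intro x y
    rcases eq_or_ne (μ x y) 0 with hxy | hxy
    · simp [hxy]
    rw [← div_div, div_margX_eq_margYU_div_margU hμ.1 η h (margX_pos_of_ne_zero hμ.1 hxy),
      div_div]
  calc MI μ = ∑ x, ∑ y, μ x y * L (η x) y := by
        simp only [MI, hterm]
    _ = ∑ u, ∑ y, jointUY μ η u y * L u y := sum_mul_comp_eq_sum_jointUY_mul μ η L
    _ = MI (jointUY μ η) := by
        simp only [MI, margX_jointUY, margY_jointUY, L]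
        rfl
end
end

section
/- Predictive invariance implies sufficiency of the maximal invariant: let G be a finite group acting on a finite set 𝒳, and let η : 𝒳 → 𝒰 be maximal invariant (η(x) = η(z) iff z = g·x for some g ∈ G). Suppose the joint distribution μ of (X,Y) (Y in finite 𝒴) satisfies μ_{Y|X}(·|x) = μ_{Y|X}(·|g·x) for all g ∈ G and all x, g·x with positive μ_X-probability. Then I(X;Y) = I(η(X);Y). -/
open Finset

noncomputable section

/-- predictive invariance implies sufficiency of the maximal
invariant: if `μ_{Y|X}(·|x) = μ_{Y|X}(·|g·x)` for all `g` (at points of positive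
probability) and `η` is maximal invariant for the group action, then
`I(X;Y) = I(η(X);Y)`. -/
theorem stmt16 {G X Y U : Type*} [Group G] [Fintype G] [Fintype X] [Fintype Y]
    [Fintype U] [DecidableEq U] [MulAction G X]
    (μ : X → Y → ℝ) (hμ : IsDist μ) (η : X → U)
    (hmax : ∀ x z : X, η x = η z ↔ ∃ g : G, z = g • x)
    (hinv : ∀ (g : G) (x : X), 0 < margX μ x → 0 < margX μ (g • x) →
      ∀ y, μ x y / margX μ x = μ (g • x) y / margX μ (g • x)) :
    MI μ = MI (jointUY μ η) := by
  obtain ⟨hpos, _⟩ := hμ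
  have hXnn : ∀ x, 0 ≤ margX μ x := fun x => Finset.sum_nonneg fun y _ => hpos x y
  have hle : ∀ x y, μ x y ≤ margX μ x := fun x y =>
    Finset.single_le_sum (fun y _ => hpos x y) (Finset.mem_univ y)
  have hleY : ∀ x y, μ x y ≤ margY μ y := fun x y =>
    Finset.single_le_sum (fun x _ => hpos x y) (Finset.mem_univ x)
  have hUge : ∀ x, margX μ x ≤ margU μ η (η x) := by
    intro x
    have h := Finset.single_le_sum (f := fun z => if η z = η x then margX μ z else 0)
      (fun z _ => by by_cases h : η z = η x <;> simp [h, hXnn z]) (Finset.mem_univ x)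
    simpa [margU] using h
  have key : ∀ x y, μ x y * margU μ η (η x) = margYU μ η y (η x) * margX μ x := by
    intro x y
    by_cases hx : 0 < margX μ x
    · unfold margU margYU
      rw [Finset.mul_sum, Finset.sum_mul]
      refine Finset.sum_congr rfl fun z _ => ?_
      by_cases h : η z = η x
      · simp only [h, if_true]
        obtain ⟨g, hg⟩ := (hmax x z).mp h.symm
        by_cases hz : 0 < margX μ z
        · have h2 := hinv g x hx (by rw [← hg]; exact hz) y
          rw [← hg] at h2
          have h1 := (div_eq_div_iff hx.ne' hz.ne').mp h2
          linarith
        · have hz0 : margX μ z = 0 := le_antisymm (not_lt.mp hz) (hXnn z)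
          have hz1 : μ z y = 0 := le_antisymm (hz0 ▸ hle z y) (hpos z y)
          simp [hz0, hz1]
      · simp [h]
    · have hx0 : margX μ x = 0 := le_antisymm (not_lt.mp hx) (hXnn x)
      have h0 : μ x y = 0 := le_antisymm (hx0 ▸ hle x y) (hpos x y)
      simp [hx0, h0]
  set L : U → Y → ℝ := fun u y =>
    Real.log (margYU μ η y u / (margU μ η u * margY μ y)) with hL
  have hmX : ∀ u, margX (jointUY μ η) u = margU μ η u := by
    intro u
    unfold margX jointUY margYU margU
    rw [Finset.sum_comm]
    refine Finset.sum_congr rfl fun x _ => ?_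
    by_cases h : η x = u <;> simp [h, margX]
  have hmY : ∀ y, margY (jointUY μ η) y = margY μ y := by
    intro y
    unfold margY jointUY margYU
    rw [Finset.sum_comm]
    refine Finset.sum_congr rfl fun x _ => ?_
    simp [margY]
  have step1 : MI μ = ∑ x, ∑ y, μ x y * L (η x) y := by
    unfold MI
    refine Finset.sum_congr rfl fun x _ => Finset.sum_congr rfl fun y _ => ?_
    rcases eq_or_lt_of_le (hpos x y) with h | h
    · simp [← h]
    · have hx : 0 < margX μ x := lt_of_lt_of_le h (hle x y)
      have hy : 0 < margY μ y := lt_of_lt_of_le h (hleY x y)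
      have hu : 0 < margU μ η (η x) := lt_of_lt_of_le hx (hUge x)
      have harg : μ x y / (margX μ x * margY μ y)
          = margYU μ η y (η x) / (margU μ η (η x) * margY μ y) := by
        rw [div_eq_div_iff (by positivity) (by positivity)]
        linear_combination margY μ y * key x y
      rw [harg, hL]
  have step2 : MI (jointUY μ η) = ∑ u, ∑ y, margYU μ η y u * L u y := by
    unfold MI
    refine Finset.sum_congr rfl fun u _ => Finset.sum_congr rfl fun y _ => ?_
    rw [hmX, hmY, hL]
    rfl
  rw [step1, step2, Finset.sum_comm]
  rw [show (∑ u, ∑ y, margYU μ η y u * L u y) = ∑ y, ∑ u, margYU μ η y u * L u y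
    from Finset.sum_comm]
  refine Finset.sum_congr rfl fun y _ => ?_
  have expand : ∀ u, margYU μ η y u * L u y = ∑ x, (if η x = u then μ x y else 0) * L u y := by
    intro u; rw [margYU, Finset.sum_mul]
  simp only [expand]
  rw [Finset.sum_comm]
  refine Finset.sum_congr rfl fun x _ => ?_
  simp [ite_mul, Finset.sum_ite_eq]
end
end
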